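/- Let U be a complex unitary matrix of size d1·d2, indexed by pairs from Fin d1 × Fin d2, with d1, d2 ≥ 1. Then z_{d1:d2}(U) ≤ |tr(U)| / (d1·d2); i.e., the minimum over unit vectors ψ1 ∈ ℂ^{d1}, ψ2 ∈ ℂ^{d2} of |⟨ψ1⊗ψ2, U(ψ1⊗ψ2)⟩| is at most |tr(U)| / (d1·d2), because the barycenter of the spectrum tr(U)/(d1·d2) always belongs to the product numerical range W^⊗_{d1:d2}(U). -/

import Mathlib

open scoped ComplexInnerProductSpace

/-
Toeplitz–Hausdorff: the numerical range of an operator is convex, so it contains the average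
`tr A / n` of the diagonal entries of any `n × n` matrix `A`. Apply this first to the partial
trace `tr₂ U` (whose trace is `tr U`), giving a unit `ψ₁` with `⟨ψ₁, tr₂ U ψ₁⟩ = tr U / d₁`, and
then to the compression `(⟨ψ₁| ⊗ 1) U (|ψ₁⟩ ⊗ 1)` on the second factor, whose trace is exactly
`⟨ψ₁, tr₂ U ψ₁⟩`; a unit `ψ₂` then gives `⟨ψ₁ ⊗ ψ₂, U (ψ₁ ⊗ ψ₂)⟩ = tr U / (d₁ d₂)`.
-/

/-- The tensor (Kronecker) product of two vectors: `(ψ1 ⊗ ψ2)_{(i,j)} = (ψ1)_i · (ψ2)_j`. -/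
noncomputable def tensorVec {d1 d2 : ℕ} (ψ1 : EuclideanSpace ℂ (Fin d1))
    (ψ2 : EuclideanSpace ℂ (Fin d2)) : EuclideanSpace ℂ (Fin d1 × Fin d2) :=
  WithLp.toLp 2 (fun p => ψ1 p.1 * ψ2 p.2)

/-- Product numerical range `W^⊗_{d1:d2}(X) = {⟨ψ1⊗ψ2, X(ψ1⊗ψ2)⟩ : ‖ψ1‖ = ‖ψ2‖ = 1}`. -/
noncomputable def prodNumRange {d1 d2 : ℕ}
    (X : Matrix (Fin d1 × Fin d2) (Fin d1 × Fin d2) ℂ) : Set ℂ :=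
  {z | ∃ (ψ1 : EuclideanSpace ℂ (Fin d1)) (ψ2 : EuclideanSpace ℂ (Fin d2)),
    ‖ψ1‖ = 1 ∧ ‖ψ2‖ = 1 ∧ ⟪tensorVec ψ1 ψ2, Matrix.toEuclideanLin X (tensorVec ψ1 ψ2)⟫ = z}

section NumericalRange

variable {E : Type*} [NormedAddCommGroup E] [InnerProductSpace ℂ E]

def numRange (T : E →ₗ[ℂ] E) : Set ℂ := {z | ∃ x : E, ‖x‖ = 1 ∧ ⟪x, T x⟫ = z}

/- `Im (c α + c̄ β) = Im (c (α - β̄))`, and `c = exp (-i arg (α - β̄))` makes `c (α - β̄)` real. -/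
lemma exists_norm_eq_one_im_mul_add_conj_mul_eq_zero (α β : ℂ) :
    ∃ c : ℂ, ‖c‖ = 1 ∧ (c * α + (starRingEnd ℂ) c * β).im = 0 := by
  set γ := α - (starRingEnd ℂ) β
  refine ⟨Complex.exp (-(γ.arg * Complex.I)), by simp [Complex.norm_exp], ?_⟩
  have hreal : Complex.exp (-(γ.arg * Complex.I)) * γ = ‖γ‖ := by
    nth_rw 2 [← Complex.norm_mul_exp_arg_mul_I γ]
    rw [mul_left_comm, ← Complex.exp_add, neg_add_cancel, Complex.exp_zero, mul_one]
  have := congrArg Complex.im hreal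
  simp only [γ, Complex.mul_im, Complex.add_im, Complex.sub_im, Complex.sub_re, Complex.conj_re,
    Complex.conj_im, Complex.ofReal_im] at this ⊢
  linarith

lemma inner_map_self_div_norm_sq_mem_numRange (T : E →ₗ[ℂ] E) {w : E} (hw : w ≠ 0) :
    ⟪w, T w⟫ / (‖w‖ ^ 2 : ℝ) ∈ numRange T := by
  refine ⟨(‖w‖ : ℂ)⁻¹ • w, norm_smul_inv_norm hw, ?_⟩
  have : (‖w‖ : ℂ) ≠ 0 := by simpa using hw
  rw [map_smul, inner_smul_left, inner_smul_right, map_inv₀, Complex.conj_ofReal]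
  push_cast
  field_simp

lemma mul_add_mem_numRange_smul_add_smul_id {T : E →ₗ[ℂ] E} {z : ℂ} (hz : z ∈ numRange T)
    (c d : ℂ) :
    c * z + d ∈ numRange (c • T + d • LinearMap.id) := by
  obtain ⟨x, hx, rfl⟩ := hz
  refine ⟨x, hx, ?_⟩
  simp [inner_self_eq_norm_sq_to_K, hx]

lemma smul_add_smul_ne_zero {S : E →ₗ[ℂ] E} {x y : E} (hSx : ⟪x, S x⟫ = 1) (hSy : ⟪y, S y⟫ = 0)
    {s t : ℂ} (hs : s ≠ 0) : s • x + t • y ≠ 0 := by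
  intro h
  have h' := congrArg (fun v => ⟪v, S v⟫) (eq_neg_of_add_eq_zero_left h)
  simp only [map_smul, map_neg, inner_smul_left, inner_smul_right, inner_neg_left,
    inner_neg_right, hSx, hSy] at h'
  simp [hs] at h'

/- Along `w t = (1 - t) x + t y` the form `⟪w t, S (w t)⟫` is real, so the Rayleigh quotient
runs continuously from `1` to `0` and takes every value in between. -/
lemma ofReal_mem_numRange_of_im_eq_zero {S : E →ₗ[ℂ] E} {x y : E} (hx : ‖x‖ = 1) (hy : ‖y‖ = 1)
    (hSx : ⟪x, S x⟫ = 1) (hSy : ⟪y, S y⟫ = 0) (hxy : (⟪x, S y⟫ + ⟪y, S x⟫).im = 0)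
    {a : ℝ} (ha : a ∈ Set.Icc (0 : ℝ) 1) : (a : ℂ) ∈ numRange S := by
  set γ := (⟪x, S y⟫ + ⟪y, S x⟫).re
  set w : ℝ → E := fun t => ((1 - t : ℝ) : ℂ) • x + (t : ℂ) • y
  have hw : ∀ t, ⟪w t, S (w t)⟫ = ((1 - t) ^ 2 + t * (1 - t) * γ : ℝ) := by
    intro t
    have : ⟪x, S y⟫ + ⟪y, S x⟫ = γ := Complex.ext rfl hxy
    simp only [w, map_add, map_smul, inner_add_left, inner_add_right, inner_smul_left,
      inner_smul_right, Complex.conj_ofReal, hSx, hSy]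
    push_cast
    linear_combination (t * (1 - t) : ℂ) * this
  have hw_ne : ∀ t ∈ Set.Icc (0 : ℝ) 1, w t ≠ 0 := by
    rintro t ⟨-, ht1⟩
    rcases ht1.lt_or_eq with ht1 | rfl
    · exact smul_add_smul_ne_zero hSx hSy (by exact_mod_cast (sub_pos.2 ht1).ne')
    · simp [w, ← norm_ne_zero_iff, hy]
  set F : ℝ → ℝ := fun t => (1 - t) ^ 2 + t * (1 - t) * γ - a * ‖w t‖ ^ 2
  have hF : Continuous F := by fun_prop
  have hF0 : F 0 = 1 - a := by simp [F, w, hx]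
  have hF1 : F 1 = -a := by simp [F, w, hy]
  obtain ⟨t, ht, hFt⟩ := intermediate_value_Icc' zero_le_one hF.continuousOn
    (show (0 : ℝ) ∈ Set.Icc (F 1) (F 0) by rw [hF0, hF1]; constructor <;> linarith [ha.1, ha.2])
  convert inner_map_self_div_norm_sq_mem_numRange S (hw_ne t ht) using 1
  have : ‖w t‖ ≠ 0 := norm_ne_zero_iff.2 (hw_ne t ht)
  rw [hw, ← Complex.ofReal_div, Complex.ofReal_inj, eq_div_iff (by positivity)]
  linarith [show F t = 0 from hFt]

/- Toeplitz–Hausdorff. Normalising `T` to `S = (T - q) / (p - q)` turns `p, q` into `1, 0`, and a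
phase on `y` makes the cross term `⟪x, S y⟫ + ⟪y, S x⟫` real. -/
theorem convex_numRange (T : E →ₗ[ℂ] E) : Convex ℝ (numRange T) := by
  rintro p hp q hq a b ha hb hab
  rcases eq_or_ne p q with rfl | hpq
  · rwa [← add_smul, hab, one_smul]
  obtain ⟨x, hx, hTx⟩ := hp
  obtain ⟨y, hy, hTy⟩ := hq
  have hpq' : p - q ≠ 0 := sub_ne_zero.2 hpq
  let S := (p - q)⁻¹ • (T - q • LinearMap.id)
  have hS : ∀ z : E, ‖z‖ = 1 → ⟪z, S z⟫ = (p - q)⁻¹ * (⟪z, T z⟫ - q) := fun z hz => by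
    simp [S, inner_self_eq_norm_sq_to_K, hz]
  obtain ⟨c, hc, him⟩ := exists_norm_eq_one_im_mul_add_conj_mul_eq_zero ⟪x, S y⟫ ⟪y, S x⟫
  have hcy : ‖c • y‖ = 1 := by rw [norm_smul, hc, hy, one_mul]
  have haS : (a : ℂ) ∈ numRange S := by
    refine ofReal_mem_numRange_of_im_eq_zero hx hcy ?_ ?_ ?_ ⟨ha, by linarith⟩
    · rw [hS x hx, hTx, inv_mul_cancel₀ hpq']
    · rw [hS _ hcy, map_smul, inner_smul_left, inner_smul_right, hTy, ← mul_assoc,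
        Complex.conj_mul', hc]
      simp
    · rwa [map_smul, inner_smul_right, inner_smul_left]
  convert mul_add_mem_numRange_smul_add_smul_id haS (p - q) q using 1
  · rw [smul_smul, mul_inv_cancel₀ hpq', one_smul, sub_add_cancel]
  · have hb' : (b : ℂ) = 1 - a := by rw [eq_sub_iff_add_eq, add_comm]; exact_mod_cast hab
    rw [Complex.real_smul, Complex.real_smul, hb']
    ring

end NumericalRange

section MatrixNumRange

variable {ι : Type*} [Fintype ι] [DecidableEq ι]

lemma inner_toEuclideanLin_self (A : Matrix ι ι ℂ) (x : EuclideanSpace ℂ ι) :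
    ⟪x, Matrix.toEuclideanLin A x⟫ = ∑ i, ∑ j, (starRingEnd ℂ) (x i) * A i j * x j := by
  simp [EuclideanSpace.inner_eq_star_dotProduct, dotProduct, Matrix.mulVec, Finset.mul_sum,
    mul_comm, mul_left_comm, mul_assoc]

lemma diag_mem_numRange (A : Matrix ι ι ℂ) (i : ι) :
    A i i ∈ numRange (Matrix.toEuclideanLin A) :=
  ⟨EuclideanSpace.single i 1, by simp, by simp [inner_toEuclideanLin_self]⟩

lemma trace_div_card_mem_numRange [Nonempty ι] (A : Matrix ι ι ℂ) :
    A.trace / Fintype.card ι ∈ numRange (Matrix.toEuclideanLin A) := by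
  have hcard : (Fintype.card ι : ℝ) ≠ 0 := Nat.cast_ne_zero.2 Fintype.card_ne_zero
  convert (convex_numRange _).sum_mem (t := Finset.univ) (w := fun _ => (Fintype.card ι : ℝ)⁻¹)
    (fun _ _ => by positivity) (by simp [hcard]) (fun i _ => diag_mem_numRange A i) using 1
  simp [Matrix.trace, Complex.real_smul, ← Finset.mul_sum, div_eq_inv_mul]

end MatrixNumRange

section PartialTrace

variable {ι κ : Type*} [Fintype ι] [Fintype κ]

/- `U` as a `κ × κ` block matrix whose blocks are `ι × ι` matrices. -/
def innerBlock (U : Matrix (ι × κ) (ι × κ) ℂ) (j j' : κ) : Matrix ι ι ℂ :=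
  Matrix.of fun i i' => U (i, j) (i', j')

def partialTraceRight (U : Matrix (ι × κ) (ι × κ) ℂ) : Matrix ι ι ℂ := ∑ j, innerBlock U j j

lemma trace_partialTraceRight (U : Matrix (ι × κ) (ι × κ) ℂ) :
    (partialTraceRight U).trace = U.trace := by
  rw [partialTraceRight, Matrix.trace_sum, Matrix.trace, Fintype.sum_prod_type, Finset.sum_comm]
  rfl

variable [DecidableEq ι]

noncomputable def compressLeft (U : Matrix (ι × κ) (ι × κ) ℂ) (ψ : EuclideanSpace ℂ ι) :
    Matrix κ κ ℂ :=
  Matrix.of fun j j' => ⟪ψ, Matrix.toEuclideanLin (innerBlock U j j') ψ⟫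

lemma trace_compressLeft (U : Matrix (ι × κ) (ι × κ) ℂ) (ψ : EuclideanSpace ℂ ι) :
    (compressLeft U ψ).trace = ⟪ψ, Matrix.toEuclideanLin (partialTraceRight U) ψ⟫ := by
  simp [compressLeft, partialTraceRight, Matrix.trace, map_sum]

end PartialTrace

lemma inner_tensorVec_toEuclideanLin {d1 d2 : ℕ}
    (U : Matrix (Fin d1 × Fin d2) (Fin d1 × Fin d2) ℂ) (ψ1 : EuclideanSpace ℂ (Fin d1))
    (ψ2 : EuclideanSpace ℂ (Fin d2)) :
    ⟪tensorVec ψ1 ψ2, Matrix.toEuclideanLin U (tensorVec ψ1 ψ2)⟫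
      = ⟪ψ2, Matrix.toEuclideanLin (compressLeft U ψ1) ψ2⟫ := by
  simp only [inner_toEuclideanLin_self, Fintype.sum_prod_type, compressLeft, innerBlock,
    Matrix.of_apply, tensorVec, map_mul, Finset.mul_sum, Finset.sum_mul]
  rw [Finset.sum_comm]
  refine Finset.sum_congr rfl fun j _ => ?_
  rw [Finset.sum_congr rfl fun i _ => Finset.sum_comm, Finset.sum_comm]
  refine Finset.sum_congr rfl fun j' _ => Finset.sum_congr rfl fun i _ =>
    Finset.sum_congr rfl fun i' _ => ?_
  ring

theorem stmt14_general {d1 d2 : ℕ} (hd1 : 1 ≤ d1) (hd2 : 1 ≤ d2)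
    (U : Matrix (Fin d1 × Fin d2) (Fin d1 × Fin d2) ℂ) :
    U.trace / ((d1 : ℂ) * d2) ∈ prodNumRange U ∧
    sInf ((fun z : ℂ => ‖z‖) '' prodNumRange U) ≤ ‖U.trace‖ / ((d1 : ℝ) * d2) := by
  have : Nonempty (Fin d1) := Fin.pos_iff_nonempty.1 hd1
  have : Nonempty (Fin d2) := Fin.pos_iff_nonempty.1 hd2
  obtain ⟨ψ1, hψ1, h1⟩ := trace_div_card_mem_numRange (partialTraceRight U)
  obtain ⟨ψ2, hψ2, h2⟩ := trace_div_card_mem_numRange (compressLeft U ψ1)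
  have hmem : U.trace / ((d1 : ℂ) * d2) ∈ prodNumRange U := by
    refine ⟨ψ1, ψ2, hψ1, hψ2, ?_⟩
    rw [inner_tensorVec_toEuclideanLin, h2, trace_compressLeft, h1, trace_partialTraceRight]
    simp [div_div]
  refine ⟨hmem, ?_⟩
  calc sInf ((fun z : ℂ => ‖z‖) '' prodNumRange U)
      ≤ ‖U.trace / ((d1 : ℂ) * d2)‖ :=
        csInf_le ⟨0, by rintro _ ⟨z, -, rfl⟩; exact norm_nonneg z⟩ ⟨_, hmem, rfl⟩
    _ = ‖U.trace‖ / ((d1 : ℝ) * d2) := by simp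

/-- For a unitary `U` of size `d1·d2`, the barycenter of the spectrum
`tr(U)/(d1·d2)` belongs to the product numerical range `W^⊗_{d1:d2}(U)`, and therefore
`z_{d1:d2}(U) = inf {|x| : x ∈ W^⊗_{d1:d2}(U)} ≤ |tr(U)|/(d1·d2)`. -/
theorem stmt14 {d1 d2 : ℕ} (hd1 : 1 ≤ d1) (hd2 : 1 ≤ d2)
    (U : Matrix (Fin d1 × Fin d2) (Fin d1 × Fin d2) ℂ)
    (hU : U ∈ Matrix.unitaryGroup (Fin d1 × Fin d2) ℂ) :
    U.trace / ((d1 : ℂ) * d2) ∈ prodNumRange U ∧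
    sInf ((fun z : ℂ => ‖z‖) '' prodNumRange U) ≤ ‖U.trace‖ / ((d1 : ℝ) * d2) :=
  stmt14_general hd1 hd2 U
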